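/- Monotone distance key inequality (Case 2 of Theorem 4.4): let β, δ > 0, let d, d', w ≥ 0 with 0 < d, w ≤ d, d' ≤ d, and d' + w ≥ d (so d'/(d − w) ≥ 1 when w < d). Let q ∈ [0, 1) satisfy q ≥ β·(d'/(d − w) − 1), and let Δ ≥ 1 + 1/β. Then Δ·q + Δ·(1 − q)·(1 − d'/d) ≥ q + (1 − q)·(w/d). -/

import Mathlib

/-! The increment `d'/(d-w) - d'/d` of the ratio `d'/·` when the denominator shrinks from `d` to
`d - w` equals `(d'/(d-w))·(w/d)`, which is at least `w/d` because `d' + w ≥ d`. The hypothesis on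
`q` bounds `d'/(d-w) - 1` by `q/β`, so `w/d ≤ q/β + (1 - d'/d)`; multiplying by `1 - q` and using
`Δ ≥ 1 + 1/β` (and `Δ ≥ 1`) absorbs `q/β` into `Δ·q`. -/

theorem div_sub_sub_div_eq_div_mul_div {d d' w : ℝ} (hd : d ≠ 0) (hdw : d - w ≠ 0) :
    d' / (d - w) - d' / d = d' / (d - w) * (w / d) := by
  field_simp
  ring

theorem div_le_div_sub_sub_div {d d' w : ℝ} (hd : 0 < d) (hw0 : 0 ≤ w) (hwd : w < d)
    (hdw : d ≤ d' + w) :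
    w / d ≤ d' / (d - w) - d' / d := by
  have hdw' : 0 < d - w := sub_pos.2 hwd
  rw [div_sub_sub_div_eq_div_mul_div hd.ne' hdw'.ne']
  exact le_mul_of_one_le_left (div_nonneg hw0 hd.le) ((one_le_div hdw').2 (by linarith))

theorem stmt_15_general (β d d' w q Δ : ℝ)
    (hβ : 0 < β) (hd : 0 < d)
    (hw0 : 0 ≤ w) (hwd : w < d)
    (hd'd : d' ≤ d)
    (hdw : d ≤ d' + w)
    (hq0 : 0 ≤ q) (hq1 : q < 1)
    (hq : β * (d' / (d - w) - 1) ≤ q)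
    (hΔ : 1 + 1 / β ≤ Δ) :
    q + (1 - q) * (w / d) ≤ Δ * q + Δ * (1 - q) * (1 - d' / d) := by
  have hratio : d' / (d - w) - 1 ≤ q / β := (le_div_iff₀ hβ).2 (by linarith)
  have hwd_le : w / d ≤ q / β + (1 - d' / d) := by
    linarith [div_le_div_sub_sub_div hd hw0 hwd hdw]
  have hs : 0 ≤ 1 - d' / d := sub_nonneg.2 ((div_le_one hd).2 hd'd)
  have hqβ : 0 ≤ q / β := div_nonneg hq0 hβ.le
  calc q + (1 - q) * (w / d)
      ≤ q + (1 - q) * (q / β + (1 - d' / d)) := by gcongr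
    _ ≤ (1 + 1 / β) * q + 1 * (1 - q) * (1 - d' / d) := by
        have : (1 - q) * (q / β) ≤ q / β := mul_le_of_le_one_left hqβ (by linarith)
        rw [one_add_mul, one_div_mul_eq_div]
        linarith
    _ ≤ Δ * q + Δ * (1 - q) * (1 - d' / d) := by
        have hΔ1 : 1 ≤ Δ := by linarith [one_div_pos.2 hβ]
        gcongr

/-- Monotone-distance key inequality, Case 2 (`q < βδ`) of Theorem 4.4:
with `q ≥ β·(d'/(d-w) - 1)` and `Δ ≥ 1 + 1/β`,
`Δ·q + Δ·(1-q)·(1 - d'/d) ≥ q + (1-q)·(w/d)`. -/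
theorem stmt_15 (β δ d d' w q Δ : ℝ)
    (hβ : 0 < β) (hδ : 0 < δ) (hd : 0 < d)
    (hw0 : 0 ≤ w) (hwd : w < d)
    (hd'0 : 0 ≤ d') (hd'd : d' ≤ d)
    (hdw : d ≤ d' + w)
    (hq0 : 0 ≤ q) (hq1 : q < 1)
    (hq : β * (d' / (d - w) - 1) ≤ q)
    (hΔ : 1 + 1 / β ≤ Δ) :
    q + (1 - q) * (w / d) ≤ Δ * q + Δ * (1 - q) * (1 - d' / d) :=
  stmt_15_general β d d' w q Δ hβ hd hw0 hwd hd'd hdw hq0 hq1 hq hΔ
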